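/- Let M be a matroid on a finite ground set and let X and Y be cyclic flats of M. Let Z∧ denote the union of all circuits of M contained in X ∩ Y, and let Z∨ denote the closure of X ∪ Y. Then: (i) Z∨ is a cyclic flat of M; (ii) Z∧ is a cyclic flat of M; and (iii) r_M(X) + r_M(Y) ≥ r_M(Z∨) + r_M(Z∧) + |(X ∩ Y) ∖ Z∧|. -/

import Mathlib

open scoped BigOperators

attribute [local instance] Classical.propDecidable

/-- A matroid on a finite ground set `E`, given by its rank function on `Finset`s,
satisfying the rank axioms: boundedness by cardinality, monotonicity and
submodularity (for subsets of the ground set). -/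
structure FinMatroid (α : Type) where
  /-- the ground set -/
  E : Finset α
  /-- the rank function -/
  rk : Finset α → ℕ
  rk_le_card : ∀ X, X ⊆ E → rk X ≤ X.card
  rk_mono : ∀ X Y, X ⊆ Y → Y ⊆ E → rk X ≤ rk Y
  rk_submodular : ∀ X Y, X ⊆ E → Y ⊆ E → rk (X ∪ Y) + rk (X ∩ Y) ≤ rk X + rk Y

namespace FinMatroid

variable {α : Type} [DecidableEq α] (M : FinMatroid α)

/-- A circuit: a minimal dependent subset of the ground set. -/
def IsCircuit (C : Finset α) : Prop :=
  C ⊆ M.E ∧ M.rk C < C.card ∧ ∀ X, X ⊂ C → M.rk X = X.card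

/-- A cyclic set: a union of circuits, i.e. every element lies in a circuit
contained in the set. -/
def IsCyclic (X : Finset α) : Prop :=
  X ⊆ M.E ∧ ∀ x ∈ X, ∃ C, C ⊆ X ∧ M.IsCircuit C ∧ x ∈ C

/-- The closure of a set: all ground set elements whose insertion does not
increase the rank. -/
def closure (X : Finset α) : Finset α :=
  M.E.filter (fun y => M.rk (insert y X) = M.rk X)

/-- A flat: a subset of the ground set equal to its closure. -/
def IsFlat (X : Finset α) : Prop :=
  X ⊆ M.E ∧ M.closure X = X

/-- A cyclic flat: a flat that is also a union of circuits. -/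
def IsCyclicFlat (X : Finset α) : Prop :=
  M.IsFlat X ∧ M.IsCyclic X

end FinMatroid

/-- The union of all circuits of `M` contained in `X ∩ Y` (the meet of `X` and `Y`
in the lattice of cyclic flats). -/
noncomputable def FinMatroid.cfMeet {α : Type} [DecidableEq α] (M : FinMatroid α) (X Y : Finset α) :
    Finset α :=
  (X ∩ Y).filter (fun x => ∃ C, C ⊆ X ∩ Y ∧ M.IsCircuit C ∧ x ∈ C)

/-! Everything rests on one consequence of submodularity: if adding `z ∉ S` to `S` does not
raise the rank, then `z` lies in a circuit inside `insert z S` (a minimal dependent subset of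
`insert z I` for a maximal independent `I ⊆ S`). Hence `cl(X ∪ Y)` is a union of circuits, and the
meet `Z` is closed: an element of `cl Z ⊆ cl X ∩ cl Y = X ∩ Y` outside `Z` would lie in a circuit
inside `X ∩ Y`. For the same reason each element of `(X ∩ Y) \ Z` raises the rank by one, so
`r Z + |(X ∩ Y) \ Z| ≤ r(X ∩ Y)`; submodularity and `r(cl(X ∪ Y)) = r(X ∪ Y)` finish. -/

namespace FinMatroid

variable {α : Type} (M : FinMatroid α)

lemma rk_empty : M.rk ∅ = 0 :=
  Nat.le_zero.mp (M.rk_le_card ∅ (Finset.empty_subset _))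

lemma exists_isCircuit_subset {D : Finset α} (hD : D ⊆ M.E) (hdep : M.rk D < D.card) :
    ∃ C ⊆ D, M.IsCircuit C := by
  obtain ⟨C, hCD, hCmin⟩ := exists_minimal_le_of_wellFoundedLT (fun C => M.rk C < C.card) D hdep
  have hCE : C ⊆ M.E := hCD.trans hD
  refine ⟨C, hCD, hCE, hCmin.prop, fun W hWC => ?_⟩
  have hW := M.rk_le_card W (hWC.subset.trans hCE)
  have hWindep := hCmin.not_prop_of_lt hWC
  omega

variable [DecidableEq α]

lemma rk_union_add_rk_inter_le {X Y : Finset α} (hX : X ⊆ M.E) (hY : Y ⊆ M.E) :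
    M.rk (X ∪ Y) + M.rk (X ∩ Y) ≤ M.rk X + M.rk Y := by
  convert M.rk_submodular X Y hX hY

lemma rk_insert_le_succ {X : Finset α} {y : α} (hX : X ⊆ M.E) (hy : y ∈ M.E) :
    M.rk (insert y X) ≤ M.rk X + 1 := by
  have hy' : {y} ⊆ M.E := Finset.singleton_subset_iff.mpr hy
  have hsub := M.rk_union_add_rk_inter_le hy' hX
  have hy1 : M.rk {y} ≤ 1 := M.rk_le_card {y} hy'
  rw [← Finset.insert_eq] at hsub
  omega

lemma rk_union_eq_of_forall_rk_insert_eq {T A : Finset α} (hT : T ⊆ M.E) (hA : A ⊆ M.E)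
    (h : ∀ a ∈ A, M.rk (insert a T) = M.rk T) : M.rk (T ∪ A) = M.rk T := by
  induction A using Finset.induction_on with
  | empty => rw [Finset.union_empty]
  | insert a A _ ih =>
    have haE : a ∈ M.E := hA (Finset.mem_insert_self a A)
    have hAE : A ⊆ M.E := (Finset.subset_insert a A).trans hA
    have hTA := ih hAE fun b hb => h b (Finset.mem_insert_of_mem hb)
    have hsub := M.rk_union_add_rk_inter_le (Finset.insert_subset haE hT)
      (Finset.union_subset hT hAE)
    have hinter : M.rk T ≤ M.rk (insert a T ∩ (T ∪ A)) :=
      M.rk_mono _ _ (fun x hx => by simp [hx])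
        (Finset.inter_subset_left.trans (Finset.insert_subset haE hT))
    have hmono : M.rk T ≤ M.rk (T ∪ insert a A) :=
      M.rk_mono _ _ Finset.subset_union_left (Finset.union_subset hT hA)
    have hunion : insert a T ∪ (T ∪ A) = T ∪ insert a A := by
      ext x; simp only [Finset.mem_union, Finset.mem_insert]; tauto
    rw [hunion] at hsub
    have ha := h a (Finset.mem_insert_self a A)
    omega

lemma mem_closure {X : Finset α} {y : α} :
    y ∈ M.closure X ↔ y ∈ M.E ∧ M.rk (insert y X) = M.rk X := by
  simp [closure]

lemma closure_subset_ground (X : Finset α) : M.closure X ⊆ M.E :=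
  Finset.filter_subset _ _

lemma subset_closure {X : Finset α} (hX : X ⊆ M.E) : X ⊆ M.closure X := fun x hx =>
  M.mem_closure.mpr ⟨hX hx, by rw [Finset.insert_eq_of_mem hx]⟩

lemma rk_closure {X : Finset α} (hX : X ⊆ M.E) : M.rk (M.closure X) = M.rk X := by
  have h := M.rk_union_eq_of_forall_rk_insert_eq hX (M.closure_subset_ground X)
    fun y hy => (M.mem_closure.mp hy).2
  rwa [Finset.union_eq_right.mpr (M.subset_closure hX)] at h

lemma closure_mono {X Y : Finset α} (hXY : X ⊆ Y) (hY : Y ⊆ M.E) :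
    M.closure X ⊆ M.closure Y := by
  intro y hy
  obtain ⟨hyE, hyX⟩ := M.mem_closure.mp hy
  have hX : X ⊆ M.E := hXY.trans hY
  refine M.mem_closure.mpr ⟨hyE, ?_⟩
  have hsub := M.rk_union_add_rk_inter_le (Finset.insert_subset hyE hX) hY
  rw [Finset.insert_union, Finset.union_eq_right.mpr hXY] at hsub
  have hinter : M.rk X ≤ M.rk (insert y X ∩ Y) :=
    M.rk_mono _ _ (Finset.subset_inter (Finset.subset_insert y X) hXY)
      (Finset.inter_subset_right.trans hY)
  have hmono : M.rk Y ≤ M.rk (insert y Y) :=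
    M.rk_mono _ _ (Finset.subset_insert y Y) (Finset.insert_subset hyE hY)
  omega

lemma closure_closure {X : Finset α} (hX : X ⊆ M.E) :
    M.closure (M.closure X) = M.closure X := by
  refine Finset.Subset.antisymm ?_ (M.subset_closure (M.closure_subset_ground X))
  intro y hy
  obtain ⟨hyE, hyrk⟩ := M.mem_closure.mp hy
  refine M.mem_closure.mpr ⟨hyE, ?_⟩
  have hmono : M.rk (insert y X) ≤ M.rk (insert y (M.closure X)) :=
    M.rk_mono _ _ (Finset.insert_subset_insert y (M.subset_closure hX))
      (Finset.insert_subset hyE (M.closure_subset_ground X))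
  have hle : M.rk X ≤ M.rk (insert y X) :=
    M.rk_mono _ _ (Finset.subset_insert y X) (Finset.insert_subset hyE hX)
  have hrk := M.rk_closure hX
  omega

lemma isFlat_closure {X : Finset α} (hX : X ⊆ M.E) : M.IsFlat (M.closure X) :=
  ⟨M.closure_subset_ground X, M.closure_closure hX⟩

def Indep (I : Finset α) : Prop :=
  I ⊆ M.E ∧ M.rk I = I.card

variable {M} in
lemma Indep.subset {I J : Finset α} (hJ : M.Indep J) (hIJ : I ⊆ J) : M.Indep I := by
  obtain ⟨hJE, hJrk⟩ := hJ
  have hIE : I ⊆ M.E := hIJ.trans hJE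
  have hJIE : J \ I ⊆ M.E := Finset.sdiff_subset.trans hJE
  have hsub := M.rk_union_add_rk_inter_le hIE hJIE
  rw [Finset.union_sdiff_of_subset hIJ, Finset.inter_sdiff_self, M.rk_empty] at hsub
  have hI := M.rk_le_card I hIE
  have hJI := M.rk_le_card (J \ I) hJIE
  have hcard := Finset.card_sdiff_add_card_eq_card hIJ
  exact ⟨hIE, by omega⟩

lemma exists_indep_subset_rk_eq {S : Finset α} (hS : S ⊆ M.E) :
    ∃ I ⊆ S, M.Indep I ∧ M.rk I = M.rk S := by
  have hempty : ∅ ∈ S.powerset.filter M.Indep := by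
    simp [Indep, M.rk_empty]
  obtain ⟨I, -, hImax⟩ := Finset.exists_le_maximal _ hempty
  obtain ⟨hIS, hI⟩ := Finset.mem_filter.mp hImax.prop
  rw [Finset.mem_powerset] at hIS
  refine ⟨I, hIS, hI, ?_⟩
  -- an element of `S` raising the rank of `I` would extend `I` to a larger independent set
  have hspan : ∀ x ∈ S, M.rk (insert x I) = M.rk I := by
    intro x hx
    by_contra hne
    have hxI : x ∉ I := fun hxI => hne (by rw [Finset.insert_eq_of_mem hxI])
    have hxIE : insert x I ⊆ M.E := Finset.insert_subset (hS hx) hI.1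
    have hle := M.rk_insert_le_succ hI.1 (hS hx)
    have hge := M.rk_mono _ _ (Finset.subset_insert x I) hxIE
    have hcard := M.rk_le_card _ hxIE
    have hIrk := hI.2
    have hxI_indep : M.Indep (insert x I) := ⟨hxIE, by
      rw [Finset.card_insert_of_notMem hxI]; omega⟩
    have hmem : insert x I ∈ S.powerset.filter M.Indep :=
      Finset.mem_filter.mpr ⟨Finset.mem_powerset.mpr (Finset.insert_subset hx hIS), hxI_indep⟩
    exact hxI (hImax.eq_of_le hmem (Finset.subset_insert x I) ▸ Finset.mem_insert_self x I)
  have h := M.rk_union_eq_of_forall_rk_insert_eq hI.1 hS hspan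
  rwa [Finset.union_eq_right.mpr hIS, eq_comm] at h

lemma exists_isCircuit_mem_of_rk_insert_eq {S : Finset α} {z : α} (hS : S ⊆ M.E)
    (hz : z ∈ M.E) (hzS : z ∉ S) (h : M.rk (insert z S) = M.rk S) :
    ∃ C ⊆ insert z S, M.IsCircuit C ∧ z ∈ C := by
  obtain ⟨I, hIS, hI, hIrk⟩ := M.exists_indep_subset_rk_eq hS
  have hzI : z ∉ I := fun hzI => hzS (hIS hzI)
  have hdep : M.rk (insert z I) < (insert z I).card := by
    have hmono := M.rk_mono _ _ (Finset.insert_subset_insert z hIS) (Finset.insert_subset hz hS)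
    rw [Finset.card_insert_of_notMem hzI]
    have hIcard := hI.2
    omega
  obtain ⟨C, hCzI, hC⟩ := M.exists_isCircuit_subset (Finset.insert_subset hz hI.1) hdep
  refine ⟨C, hCzI.trans (Finset.insert_subset_insert z hIS), hC, ?_⟩
  by_contra hzC
  have hCI : C ⊆ I := (Finset.subset_insert_iff_of_notMem hzC).mp hCzI
  exact absurd (hI.subset hCI).2 hC.2.1.ne

lemma rk_insert_eq_succ_of_forall_isCircuit {S : Finset α} {a : α} (hS : S ⊆ M.E)
    (ha : a ∈ M.E) (haS : a ∉ S) (h : ∀ C ⊆ insert a S, M.IsCircuit C → a ∉ C) :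
    M.rk (insert a S) = M.rk S + 1 := by
  have hle := M.rk_insert_le_succ hS ha
  have hge := M.rk_mono _ _ (Finset.subset_insert a S) (Finset.insert_subset ha hS)
  by_contra hne
  obtain ⟨C, hCS, hC, haC⟩ :=
    M.exists_isCircuit_mem_of_rk_insert_eq hS ha haS (by omega)
  exact h C hCS hC haC

lemma rk_add_card_le_rk_union {T A : Finset α} (hT : T ⊆ M.E) (hA : A ⊆ M.E)
    (hTA : Disjoint T A) (h : ∀ a ∈ A, ∀ C ⊆ T ∪ A, M.IsCircuit C → a ∉ C) :
    M.rk T + A.card ≤ M.rk (T ∪ A) := by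
  induction A using Finset.induction_on with
  | empty => simp
  | insert a A haA ih =>
    rw [Finset.disjoint_insert_right] at hTA
    have hAE : A ⊆ M.E := (Finset.subset_insert a A).trans hA
    rw [Finset.union_insert] at h ⊢
    have hTA' := ih hAE hTA.2 fun b hb C hC =>
      h b (Finset.mem_insert_of_mem hb) C (hC.trans (Finset.subset_insert a _))
    have haTA : a ∉ T ∪ A := by simp [hTA.1, haA]
    have hstep := M.rk_insert_eq_succ_of_forall_isCircuit (Finset.union_subset hT hAE)
      (hA (Finset.mem_insert_self a A)) haTA (h a (Finset.mem_insert_self a A))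
    rw [Finset.card_insert_of_notMem haA]
    omega

variable {M} in
lemma IsCyclic.union {X Y : Finset α} (hX : M.IsCyclic X) (hY : M.IsCyclic Y) :
    M.IsCyclic (X ∪ Y) := by
  refine ⟨Finset.union_subset hX.1 hY.1, fun x hx => ?_⟩
  rcases Finset.mem_union.mp hx with hxX | hxY
  · obtain ⟨C, hCX, hC, hxC⟩ := hX.2 x hxX
    exact ⟨C, hCX.trans Finset.subset_union_left, hC, hxC⟩
  · obtain ⟨C, hCY, hC, hxC⟩ := hY.2 x hxY
    exact ⟨C, hCY.trans Finset.subset_union_right, hC, hxC⟩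

variable {M} in
lemma IsCyclic.closure {X : Finset α} (hX : M.IsCyclic X) : M.IsCyclic (M.closure X) := by
  refine ⟨M.closure_subset_ground X, fun z hz => ?_⟩
  by_cases hzX : z ∈ X
  · obtain ⟨C, hCX, hC, hzC⟩ := hX.2 z hzX
    exact ⟨C, hCX.trans (M.subset_closure hX.1), hC, hzC⟩
  · obtain ⟨hzE, hzrk⟩ := M.mem_closure.mp hz
    obtain ⟨C, hCX, hC, hzC⟩ := M.exists_isCircuit_mem_of_rk_insert_eq hX.1 hzE hzX hzrk
    exact ⟨C, hCX.trans (Finset.insert_subset hz (M.subset_closure hX.1)), hC, hzC⟩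

lemma mem_cfMeet {X Y : Finset α} {x : α} :
    x ∈ M.cfMeet X Y ↔ x ∈ X ∩ Y ∧ ∃ C, C ⊆ X ∩ Y ∧ M.IsCircuit C ∧ x ∈ C := by
  simp [cfMeet]

lemma cfMeet_subset_inter (X Y : Finset α) : M.cfMeet X Y ⊆ X ∩ Y :=
  Finset.filter_subset _ _

lemma subset_cfMeet {X Y C : Finset α} (hCXY : C ⊆ X ∩ Y) (hC : M.IsCircuit C) :
    C ⊆ M.cfMeet X Y := fun _ hc =>
  M.mem_cfMeet.mpr ⟨hCXY hc, C, hCXY, hC, hc⟩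

lemma isCyclic_cfMeet (X Y : Finset α) : M.IsCyclic (M.cfMeet X Y) := by
  refine ⟨fun x hx => ?_, fun x hx => ?_⟩ <;> obtain ⟨-, C, hCXY, hC, hxC⟩ := M.mem_cfMeet.mp hx
  · exact hC.1 hxC
  · exact ⟨C, M.subset_cfMeet hCXY hC, hC, hxC⟩

lemma isFlat_cfMeet {X Y : Finset α} (hX : M.IsFlat X) (hY : M.IsFlat Y) :
    M.IsFlat (M.cfMeet X Y) := by
  set D := M.cfMeet X Y
  have hDXY : D ⊆ X ∩ Y := M.cfMeet_subset_inter X Y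
  have hDE : D ⊆ M.E := (M.isCyclic_cfMeet X Y).1
  refine ⟨hDE, Finset.Subset.antisymm (fun z hz => ?_) (M.subset_closure hDE)⟩
  have hzX : z ∈ X := hX.2 ▸ M.closure_mono (hDXY.trans Finset.inter_subset_left) hX.1 hz
  have hzY : z ∈ Y := hY.2 ▸ M.closure_mono (hDXY.trans Finset.inter_subset_right) hY.1 hz
  have hzXY : z ∈ X ∩ Y := Finset.mem_inter.mpr ⟨hzX, hzY⟩
  by_contra hzD
  obtain ⟨hzE, hzrk⟩ := M.mem_closure.mp hz
  obtain ⟨C, hCD, hC, hzC⟩ := M.exists_isCircuit_mem_of_rk_insert_eq hDE hzE hzD hzrk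
  exact hzD (M.subset_cfMeet (hCD.trans (Finset.insert_subset hzXY hDXY)) hC hzC)

lemma rk_cfMeet_add_card_le {X Y : Finset α} (hXY : X ∩ Y ⊆ M.E) :
    M.rk (M.cfMeet X Y) + ((X ∩ Y) \ M.cfMeet X Y).card ≤ M.rk (X ∩ Y) := by
  have hDXY := M.cfMeet_subset_inter X Y
  have h := M.rk_add_card_le_rk_union (hDXY.trans hXY) (Finset.sdiff_subset.trans hXY)
    Finset.disjoint_sdiff fun a ha C hC hCirc haC => by
      rw [Finset.union_sdiff_of_subset hDXY] at hC
      exact (Finset.mem_sdiff.mp ha).2 (M.subset_cfMeet hC hCirc haC)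
  rwa [Finset.union_sdiff_of_subset hDXY] at h

end FinMatroid

/-- Axioms (Z0) and (Z3) of the lattice of cyclic flats: for cyclic flats `X`, `Y`,
the join `cl(X ∪ Y)` and the meet (the union of all circuits inside `X ∩ Y`) are
cyclic flats, and `rk X + rk Y ≥ rk(X ∨ Y) + rk(X ∧ Y) + |(X ∩ Y) \ (X ∧ Y)|`. -/
theorem cyclicFlat_join_meet
    {α : Type} [DecidableEq α] (M : FinMatroid α) (X Y : Finset α)
    (hX : M.IsCyclicFlat X) (hY : M.IsCyclicFlat Y) :
    M.IsCyclicFlat (M.closure (X ∪ Y)) ∧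
    M.IsCyclicFlat (M.cfMeet X Y) ∧
    M.rk (M.closure (X ∪ Y)) + M.rk (M.cfMeet X Y) + ((X ∩ Y) \ M.cfMeet X Y).card ≤
      M.rk X + M.rk Y := by
  have hXY : X ∪ Y ⊆ M.E := Finset.union_subset hX.1.1 hY.1.1
  refine ⟨⟨M.isFlat_closure hXY, (hX.2.union hY.2).closure⟩,
    ⟨M.isFlat_cfMeet hX.1 hY.1, M.isCyclic_cfMeet X Y⟩, ?_⟩
  have hjoin := M.rk_closure hXY
  have hsub := M.rk_union_add_rk_inter_le hX.1.1 hY.1.1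
  have hmeet := M.rk_cfMeet_add_card_le (Finset.inter_subset_left.trans hX.1.1 : X ∩ Y ⊆ M.E)
  omega
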